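/- arXiv:1802.09674 — 2 statements merged into one kernel-verified Lean document; each statement's English description precedes it below -/
import Mathlib

section
/- The family (Θ_λ) is stochastically increasing in λ: for all λ_1, λ_2 with 0 ≤ λ_1 ≤ λ_2 < λ_c and every m ∈ ℕ, Θ_{λ_1}({k ∈ ℕ : k ≥ m}) ≤ Θ_{λ_2}({k ∈ ℕ : k ≥ m}). -/
open scoped BigOperators

/-- The coefficients `a_k = (∏_{j=0}^{k-1} h(j)) / (∏_{j=1}^{k} g(j))`, with `a_0 = 1`. -/
noncomputable def coefA (g h : ℕ → ℝ) (k : ℕ) : ℝ :=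
  (∏ j ∈ Finset.range k, h j) / ∏ j ∈ Finset.range k, g (j + 1)

/-- The partition function `Z(λ) = Σ_{k ≥ 0} a_k λ^k`. -/
noncomputable def partZ (g h : ℕ → ℝ) (lam : ℝ) : ℝ :=
  ∑' k : ℕ, coefA g h k * lam ^ k

/-- The critical value `λ_c = liminf_{k → ∞} g(k+1)/h(k)` (as an extended real). -/
noncomputable def lamCrit (g h : ℕ → ℝ) : EReal :=
  Filter.liminf (fun k : ℕ => ((g (k + 1) / h k : ℝ) : EReal)) Filter.atTop

/-- The probability mass function `Θ_λ({k}) = a_k λ^k / Z(λ)`. -/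
noncomputable def thetaPMF (g h : ℕ → ℝ) (lam : ℝ) (k : ℕ) : ℝ :=
  coefA g h k * lam ^ k / partZ g h lam

/-!
For `0 ≤ x ≤ y`, every pair of indices `j < m ≤ k` satisfies `x^k y^j ≤ y^k x^j`. Summing over the
tail `k ≥ m` and the head `j < m` gives `T(x) S(y) ≤ T(y) S(x)` for the tail and head sums of
`Σ a_k λ^k`, which is equivalent to the inequality `T(x)/(S(x)+T(x)) ≤ T(y)/(S(y)+T(y))` between the
tail masses. Below `λ_c` the series converges by the ratio test, since `a_{k+1}/a_k = h(k)/g(k+1)`.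
-/

open Filter Finset

section TailMass

variable {a : ℕ → ℝ} {x y : ℝ}

lemma pow_mul_pow_le_pow_mul_pow (hx : 0 ≤ x) (hxy : x ≤ y) {j k : ℕ} (hjk : j ≤ k) :
    x ^ k * y ^ j ≤ y ^ k * x ^ j := by
  obtain ⟨d, rfl⟩ := Nat.exists_eq_add_of_le hjk
  have hy : 0 ≤ y := hx.trans hxy
  calc x ^ (j + d) * y ^ j = x ^ j * y ^ j * x ^ d := by ring
    _ ≤ x ^ j * y ^ j * y ^ d := by gcongr
    _ = y ^ (j + d) * x ^ j := by ring

lemma summable_mul_pow_of_le (ha : ∀ k, 0 ≤ a k) (hx : 0 ≤ x) (hxy : x ≤ y)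
    (hy : Summable fun k => a k * y ^ k) : Summable fun k => a k * x ^ k :=
  hy.of_nonneg_of_le (fun k => mul_nonneg (ha k) (pow_nonneg hx k))
    fun k => mul_le_mul_of_nonneg_left (pow_le_pow_left₀ hx hxy k) (ha k)

lemma sum_range_add_tsum_indicator {f : ℕ → ℝ} (hf : Summable f) (m : ℕ) :
    ∑ k ∈ range m, f k + ∑' k, {k | m ≤ k}.indicator f k = ∑' k, f k := by
  have hcompl : {k | m ≤ k} = ((range m : Set ℕ))ᶜ := by ext; simp
  rw [hcompl, ← _root_.tsum_subtype, hf.sum_add_tsum_compl]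

lemma tsum_indicator_mul_sum_range_le (ha : ∀ k, 0 ≤ a k) (hx : 0 ≤ x) (hxy : x ≤ y)
    (hy : Summable fun k => a k * y ^ k) (m : ℕ) :
    (∑' k, {k | m ≤ k}.indicator (fun k => a k * x ^ k) k) * ∑ j ∈ range m, a j * y ^ j ≤
      (∑' k, {k | m ≤ k}.indicator (fun k => a k * y ^ k) k) * ∑ j ∈ range m, a j * x ^ j := by
  have hx' := summable_mul_pow_of_le ha hx hxy hy
  rw [← tsum_mul_right, ← tsum_mul_right]
  refine (hx'.indicator _).mul_right _ |>.tsum_le_tsum (fun k => ?_) ((hy.indicator _).mul_right _)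
  by_cases hk : m ≤ k
  · simp only [Set.indicator_of_mem (show k ∈ {k | m ≤ k} from hk), mul_sum]
    refine sum_le_sum fun j hj => ?_
    have hjk : j ≤ k := (mem_range.mp hj).le.trans hk
    calc a k * x ^ k * (a j * y ^ j) = a k * a j * (x ^ k * y ^ j) := by ring
      _ ≤ a k * a j * (y ^ k * x ^ j) :=
        mul_le_mul_of_nonneg_left (pow_mul_pow_le_pow_mul_pow hx hxy hjk) (mul_nonneg (ha k) (ha j))
      _ = a k * y ^ k * (a j * x ^ j) := by ring
  · simp [Set.indicator_of_notMem (show k ∉ {k | m ≤ k} from hk)]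

theorem tsum_indicator_div_tsum_mono (ha : ∀ k, 0 ≤ a k) (hx : 0 ≤ x) (hxy : x ≤ y)
    (hy : Summable fun k => a k * y ^ k) (m : ℕ) :
    (∑' k, {k | m ≤ k}.indicator (fun k => a k * x ^ k) k) / ∑' k, a k * x ^ k ≤
      (∑' k, {k | m ≤ k}.indicator (fun k => a k * y ^ k) k) / ∑' k, a k * y ^ k := by
  have hx' := summable_mul_pow_of_le ha hx hxy hy
  have hZ : ∑' k, a k * x ^ k ≤ ∑' k, a k * y ^ k :=
    hx'.tsum_le_tsum (fun k => mul_le_mul_of_nonneg_left (pow_le_pow_left₀ hx hxy k) (ha k)) hy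
  have hcross := tsum_indicator_mul_sum_range_le ha hx hxy hy m
  rw [← sum_range_add_tsum_indicator hx' m, ← sum_range_add_tsum_indicator hy m] at hZ ⊢
  have hnonneg {z : ℝ} (hz : 0 ≤ z) :
      0 ≤ ∑ j ∈ range m, a j * z ^ j ∧ 0 ≤ ∑' k, {k | m ≤ k}.indicator (fun k => a k * z ^ k) k :=
    ⟨sum_nonneg fun j _ => mul_nonneg (ha j) (pow_nonneg hz j),
      tsum_nonneg fun k => Set.indicator_nonneg (fun k _ => mul_nonneg (ha k) (pow_nonneg hz k)) k⟩
  obtain ⟨hS₁, hT₁⟩ := hnonneg hx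
  obtain ⟨hS₂, hT₂⟩ := hnonneg (hx.trans hxy)
  rcases (add_nonneg hS₁ hT₁).eq_or_lt with hzero | hpos
  · rw [← hzero, div_zero]
    exact div_nonneg hT₂ (add_nonneg hS₂ hT₂)
  · rw [div_le_div_iff₀ hpos (hpos.trans_le hZ)]
    nlinarith

end TailMass

section Coefficients

variable {g h : ℕ → ℝ}

lemma coefA_pos (hg : ∀ k : ℕ, 1 ≤ k → 0 < g k) (hh : ∀ k : ℕ, 0 < h k) (k : ℕ) :
    0 < coefA g h k :=
  div_pos (prod_pos fun j _ => hh j) (prod_pos fun j _ => hg (j + 1) (Nat.le_add_left 1 j))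

lemma coefA_succ (k : ℕ) : coefA g h (k + 1) = coefA g h k * (h k / g (k + 1)) := by
  simp only [coefA, prod_range_succ]
  exact mul_div_mul_comm _ _ _ _

lemma summable_coefA_mul_pow (hg : ∀ k : ℕ, 1 ≤ k → 0 < g k) (hh : ∀ k : ℕ, 0 < h k) {lam : ℝ}
    (hlam : 0 ≤ lam) (hc : (lam : EReal) < lamCrit g h) :
    Summable fun k => coefA g h k * lam ^ k := by
  obtain ⟨r, hlr, hrc⟩ := EReal.exists_between_coe_real hc
  have hlr : lam < r := by exact_mod_cast hlr
  have hr : 0 < r := hlam.trans_lt hlr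
  refine summable_of_ratio_norm_eventually_le ((div_lt_one hr).2 hlr) ?_
  filter_upwards [eventually_lt_of_lt_liminf hrc] with k hk
  have hk : r < g (k + 1) / h k := by exact_mod_cast hk
  have hratio : h k / g (k + 1) ≤ r⁻¹ := by
    rw [← inv_div]
    exact (inv_lt_inv₀ (hr.trans hk) hr).2 hk |>.le
  have hterm (n : ℕ) : 0 ≤ coefA g h n * lam ^ n :=
    mul_nonneg (coefA_pos hg hh n).le (pow_nonneg hlam n)
  have ha := (coefA_pos hg hh k).le
  rw [Real.norm_of_nonneg (hterm _), Real.norm_of_nonneg (hterm _), coefA_succ]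
  calc coefA g h k * (h k / g (k + 1)) * lam ^ (k + 1)
      ≤ coefA g h k * r⁻¹ * lam ^ (k + 1) := by gcongr
    _ = lam / r * (coefA g h k * lam ^ k) := by ring

lemma tsum_indicator_thetaPMF (lam : ℝ) (s : Set ℕ) :
    ∑' k, s.indicator (thetaPMF g h lam) k =
      (∑' k, s.indicator (fun k => coefA g h k * lam ^ k) k) / partZ g h lam := by
  rw [← tsum_div_const]
  congr 1 with k
  by_cases hk : k ∈ s <;> simp [hk, thetaPMF]

end Coefficients

theorem theta_stochastically_increasing_general
    (g h : ℕ → ℝ) (hg : ∀ k : ℕ, 1 ≤ k → 0 < g k) (hh : ∀ k : ℕ, 0 < h k)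
    (lam₁ lam₂ : ℝ) (h₁ : 0 ≤ lam₁) (h₁₂ : lam₁ ≤ lam₂)
    (h₂c : (lam₂ : EReal) < lamCrit g h) (m : ℕ) :
    (∑' k : ℕ, Set.indicator {k : ℕ | m ≤ k} (thetaPMF g h lam₁) k)
      ≤ ∑' k : ℕ, Set.indicator {k : ℕ | m ≤ k} (thetaPMF g h lam₂) k := by
  rw [tsum_indicator_thetaPMF, tsum_indicator_thetaPMF]
  exact tsum_indicator_div_tsum_mono (fun k => (coefA_pos hg hh k).le) h₁ h₁₂
    (summable_coefA_mul_pow hg hh (h₁.trans h₁₂) h₂c) m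

/-- The family `(Θ_λ)` is stochastically increasing in `λ`:
for `0 ≤ λ₁ ≤ λ₂ < λ_c` and every `m ∈ ℕ`,
`Θ_{λ₁}({k : k ≥ m}) ≤ Θ_{λ₂}({k : k ≥ m})`. -/
theorem theta_stochastically_increasing
    (g h : ℕ → ℝ) (hg0 : g 0 = 0) (hg : ∀ k : ℕ, 1 ≤ k → 0 < g k) (hh : ∀ k : ℕ, 0 < h k)
    (lam₁ lam₂ : ℝ) (h₁ : 0 ≤ lam₁) (h₁₂ : lam₁ ≤ lam₂)
    (h₂c : (lam₂ : EReal) < lamCrit g h) (m : ℕ) :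
    (∑' k : ℕ, Set.indicator {k : ℕ | m ≤ k} (thetaPMF g h lam₁) k)
      ≤ ∑' k : ℕ, Set.indicator {k : ℕ | m ≤ k} (thetaPMF g h lam₂) k :=
  theta_stochastically_increasing_general g h hg hh lam₁ lam₂ h₁ h₁₂ h₂c m
end

section
/- Entropy truncation bound (Lemma 4.2 in measure form): let n ≥ 1 and let θ be a probability measure on ℕ with Σ_{k≥0} e^{γk} θ({k}) < ∞ for every γ > 0. Let ν = ⊗_{x ∈ ℤ^n} θ be the product probability measure on ℕ^{ℤ^n}, and fix constants C, R > 0. Then lim_{A → ∞} sup_{N ≥ 1} sup_μ (1/N^n) ∫ Σ_{x : |x| ≤ RN} η(x) · 1(η(x) > A) dμ(η) = 0, where |x| = max_{1 ≤ i ≤ n} |x_i| and the inner supremum is over all probability measures μ on ℕ^{ℤ^n} with relative entropy H(μ | ν) ≤ C N^n. -/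
open MeasureTheory
open scoped BigOperators ENNReal

open Filter ProbabilityTheory Real
open scoped Topology

/-!
The entropy inequality `γ ∫ G dμ ≤ H(μ | ν) + log ∫ exp (γ G) dν` is applied to
`G η = ∑_{|x| ≤ RN} η(x) 1(η(x) > A)`. Under the product measure `ν` the exponential moment
factorises over the `|B| ≤ (2R + 1)^n N^n` sites of the box, and each factor is at most
`1 + t_A` with `t_A = ∫_{k > A} exp (γ k) dθ`, which tends to `0` by the exponential-moment
assumption. Hence `log ∫ exp (γ G) dν ≤ |B| t_A ≤ N^n` once `t_A ≤ (2R + 1)^{-n}`, and the choice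
`γ = (C + 1) / ε` gives `∫ G dμ ≤ ε N^n`.
-/

section Box

variable {ι : Type*} [Fintype ι] [DecidableEq ι]

theorem setOf_forall_abs_le_eq_piFinset (r : ℝ) :
    {x : ι → ℤ | ∀ i, |(x i : ℝ)| ≤ r} =
      ↑(Fintype.piFinset fun _ : ι => Finset.Icc (-⌊r⌋) ⌊r⌋) := by
  ext x
  simp only [Set.mem_ofPred_eq, Finset.mem_coe, Fintype.mem_piFinset, Finset.mem_Icc]
  refine forall_congr' fun i => ?_
  rw [← abs_le, Int.le_floor, Int.cast_abs]

theorem card_piFinset_Icc_floor_mul_le {R N : ℝ} (hR : 0 ≤ R) (hN : 1 ≤ N) :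
    ((Fintype.piFinset fun _ : ι => Finset.Icc (-⌊R * N⌋) ⌊R * N⌋).card : ℝ) ≤
      (2 * R + 1) ^ Fintype.card ι * N ^ Fintype.card ι := by
  have hm : 0 ≤ ⌊R * N⌋ := Int.floor_nonneg.mpr (by positivity)
  have hIcc : ((Finset.Icc (-⌊R * N⌋) ⌊R * N⌋).card : ℝ) = 2 * ⌊R * N⌋ + 1 := by
    rw [Int.card_Icc, show ⌊R * N⌋ + 1 - -⌊R * N⌋ = 2 * ⌊R * N⌋ + 1 by ring]
    exact_mod_cast Int.toNat_of_nonneg (by omega)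
  rw [Fintype.card_piFinset, Finset.prod_const, Finset.card_univ, Nat.cast_pow, hIcc, ← mul_pow]
  gcongr
  nlinarith [Int.floor_le (R * N)]

theorem tsum_indicator_setOf_abs_le_eq_ofReal_sum (r : ℝ) (A : ℕ) (η : (ι → ℤ) → ℕ) :
    ∑' x : ι → ℤ, Set.indicator {x : ι → ℤ | ∀ i, |(x i : ℝ)| ≤ r}
        (fun x => if A < η x then (η x : ℝ≥0∞) else 0) x =
      ENNReal.ofReal (∑ x ∈ Fintype.piFinset fun _ : ι => Finset.Icc (-⌊r⌋) ⌊r⌋,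
        (Set.Ioi A).indicator (fun k : ℕ => (k : ℝ)) (η x)) := by
  rw [setOf_forall_abs_le_eq_piFinset, ← sum_eq_tsum_indicator,
    ENNReal.ofReal_sum_of_nonneg fun x _ => Set.indicator_nonneg (fun k _ => k.cast_nonneg) _]
  refine Finset.sum_congr rfl fun x _ => ?_
  by_cases h : A < η x <;> simp [h]

end Box

theorem Real.mul_le_mul_log_sub_add_exp {a : ℝ} (ha : 0 ≤ a) (b : ℝ) :
    a * b ≤ a * log a - a + exp b := by
  rcases ha.eq_or_lt with rfl | ha
  · simp [(exp_pos b).le]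
  · have h := mul_le_mul_of_nonneg_left (add_one_le_exp (b - log a)) ha.le
    rw [exp_sub, exp_log ha, mul_div_cancel₀ _ ha.ne'] at h
    linarith

theorem mul_integral_le_entropy_add_log_integral_exp {α : Type*} [MeasurableSpace α]
    {μ ν : Measure α} [IsProbabilityMeasure μ] [SigmaFinite ν] (hμν : μ ≪ ν)
    {γ : ℝ} (hγ : 0 < γ) {G : α → ℝ} (hG : Measurable G) (hG0 : 0 ≤ G)
    (hexp : Integrable (fun x => exp (γ * G x)) ν)
    (hent : Integrable (fun x => (μ.rnDeriv ν x).toReal * log (μ.rnDeriv ν x).toReal) ν) :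
    Integrable G μ ∧ γ * ∫ x, G x ∂μ ≤
      (∫ x, (μ.rnDeriv ν x).toReal * log (μ.rnDeriv ν x).toReal ∂ν) +
        log (∫ x, exp (γ * G x) ∂ν) := by
  set f : α → ℝ := fun x => (μ.rnDeriv ν x).toReal
  have : NeZero ν := ⟨fun h => IsProbabilityMeasure.ne_zero μ
    (Measure.absolutelyContinuous_zero_iff.mp (h ▸ hμν))⟩
  set Z := ∫ x, exp (γ * G x) ∂ν
  have hZ : 0 < Z := integral_exp_pos hexp
  have hf : Integrable f ν := Measure.integrable_toReal_rnDeriv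
  have hf_one : ∫ x, f x ∂ν = 1 := by simp [f, Measure.integral_toReal_rnDeriv hμν]
  -- Young's inequality at `b = γ G x - log Z`
  have hpt : ∀ x, γ * (f x * G x) ≤ f x * log (f x) - f x + exp (γ * G x) / Z + log Z * f x := by
    intro x
    have h := Real.mul_le_mul_log_sub_add_exp (a := f x) ENNReal.toReal_nonneg (γ * G x - log Z)
    rw [exp_sub, exp_log hZ] at h
    linarith
  have h₁ : Integrable (fun x => f x * log (f x) - f x) ν := hent.sub hf
  have h₂ : Integrable (fun x => f x * log (f x) - f x + exp (γ * G x) / Z) ν :=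
    h₁.add (hexp.div_const Z)
  have hrhs : Integrable
      (fun x => f x * log (f x) - f x + exp (γ * G x) / Z + log Z * f x) ν :=
    h₂.add (hf.const_mul _)
  have hfG : Integrable (fun x => f x * G x) ν := by
    refine (hrhs.div_const γ).mono' ((Measure.measurable_rnDeriv μ ν).ennreal_toReal.mul
      hG).aestronglyMeasurable (ae_of_all _ fun x => ?_)
    rw [Real.norm_of_nonneg (mul_nonneg ENNReal.toReal_nonneg (hG0 x)), le_div_iff₀ hγ, mul_comm]
    exact hpt x
  refine ⟨(integrable_toReal_rnDeriv_mul_iff hμν).mp hfG, ?_⟩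
  calc γ * ∫ x, G x ∂μ = ∫ x, γ * (f x * G x) ∂ν := by
        rw [integral_const_mul, integral_toReal_rnDeriv_mul hμν]
    _ ≤ ∫ x, (f x * log (f x) - f x + exp (γ * G x) / Z + log Z * f x) ∂ν :=
        integral_mono (hfG.const_mul γ) hrhs hpt
    _ = (∫ x, f x * log (f x) ∂ν) + log Z := by
        rw [integral_add h₂ (hf.const_mul _), integral_add h₁ (hexp.div_const Z),
          integral_sub hent hf, integral_div,
          integral_const_mul, hf_one, div_self hZ.ne']
        ring

theorem tendsto_setLIntegral_Ioi_atTop_zero {θ : Measure ℕ} {f : ℕ → ℝ≥0∞}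
    (hf : ∫⁻ k, f k ∂θ ≠ ∞) :
    Tendsto (fun A : ℕ => ∫⁻ k in Set.Ioi A, f k ∂θ) atTop (𝓝 0) := by
  simp_rw [← lintegral_indicator measurableSet_Ioi]
  have hlim : ∀ k, Tendsto (fun A : ℕ => (Set.Ioi A).indicator f k) atTop (𝓝 0) := fun k =>
    tendsto_const_nhds.congr' <| (eventually_ge_atTop k).mono fun A hA =>
      (Set.indicator_of_notMem (not_lt.mpr hA) f).symm
  simpa using tendsto_lintegral_of_dominated_convergence (f := 0) f
    (fun _ => Measurable.of_discrete) (fun A => ae_of_all _ (Set.indicator_le_self _ f)) hf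
    (ae_of_all _ hlim)

theorem lintegral_exp_mul_indicator_le {α : Type*} [MeasurableSpace α] (θ : Measure α)
    [IsProbabilityMeasure θ] {s : Set α} (hs : MeasurableSet s) (γ : ℝ) (φ : α → ℝ) :
    ∫⁻ k, ENNReal.ofReal (exp (γ * s.indicator φ k)) ∂θ ≤
      1 + ∫⁻ k in s, ENNReal.ofReal (exp (γ * φ k)) ∂θ :=
  calc ∫⁻ k, ENNReal.ofReal (exp (γ * s.indicator φ k)) ∂θ
      ≤ ∫⁻ k, 1 + s.indicator (fun k => ENNReal.ofReal (exp (γ * φ k))) k ∂θ :=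
        lintegral_mono fun k => by by_cases hk : k ∈ s <;> simp [hk]
    _ = 1 + ∫⁻ k in s, ENNReal.ofReal (exp (γ * φ k)) ∂θ := by
        rw [lintegral_add_left measurable_const, lintegral_indicator hs]
        simp

section IIDCoordinates

variable {ι β : Type*} [MeasurableSpace β] [Countable β] [MeasurableSingletonClass β]
  {θ : Measure β} [IsProbabilityMeasure θ] {ν : Measure (ι → β)}

theorem map_restrict_eq_pi
    (hν : ∀ (S : Finset ι) (vals : ι → β),
      ν {η | ∀ x ∈ S, η x = vals x} = ∏ x ∈ S, θ {vals x})
    (B : Finset ι) : ν.map B.restrict = Measure.pi fun _ : B => θ := by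
  classical
  have := nonempty_of_isProbabilityMeasure θ
  refine Measure.ext_iff_singleton.mpr fun w => ?_
  set vals : ι → β := fun x => if h : x ∈ B then w ⟨x, h⟩ else Classical.arbitrary β
  have hpre : B.restrict ⁻¹' ({w} : Set (B → β)) = {η | ∀ x ∈ B, η x = vals x} := by
    ext η
    simp only [Set.mem_preimage, Set.mem_singleton_iff, funext_iff, Set.mem_ofPred_eq]
    exact ⟨fun h x hx => by simp [vals, hx, ← h], fun h x => by simpa [vals] using h x x.2⟩
  rw [Measure.map_apply B.measurable_restrict (measurableSet_singleton w), hpre, hν,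
    ← Set.univ_pi_singleton w, Measure.pi_pi, ← Finset.prod_coe_sort B]
  simp [vals]

theorem lintegral_prod_apply_eq_pow
    (hν : ∀ (S : Finset ι) (vals : ι → β),
      ν {η | ∀ x ∈ S, η x = vals x} = ∏ x ∈ S, θ {vals x})
    (B : Finset ι) (g : β → ℝ≥0∞) :
    ∫⁻ η, ∏ x ∈ B, g (η x) ∂ν = (∫⁻ k, g k ∂θ) ^ B.card := by
  have hg : Measurable g := Measurable.of_discrete
  calc ∫⁻ η, ∏ x ∈ B, g (η x) ∂ν = ∫⁻ w, ∏ i : B, g (w i) ∂(ν.map B.restrict) := by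
        rw [lintegral_map Measurable.of_discrete B.measurable_restrict]
        exact lintegral_congr fun η => (Finset.prod_coe_sort B fun x => g (η x)).symm
    _ = ∏ i : B, ∫⁻ w, g (w i) ∂(Measure.pi fun _ : B => θ) := by
        rw [map_restrict_eq_pi hν]
        exact lintegral_prod_eq_prod_lintegral_of_indepFun _ _
          (iIndepFun_pi fun _ => hg.aemeasurable) fun i => hg.comp (measurable_pi_apply i)
    _ = (∫⁻ k, g k ∂θ) ^ B.card := by
        simp [(measurePreserving_eval (fun _ : B => θ) _).lintegral_comp hg]

theorem log_integral_exp_mul_sum_le [NeZero ν]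
    (hν : ∀ (S : Finset ι) (vals : ι → β),
      ν {η | ∀ x ∈ S, η x = vals x} = ∏ x ∈ S, θ {vals x})
    (B : Finset ι) (γ : ℝ) {φ : β → ℝ} {τ : ℝ} (hτ : 0 ≤ τ)
    (hφ : ∫⁻ k, ENNReal.ofReal (exp (γ * φ k)) ∂θ ≤ 1 + ENNReal.ofReal τ) :
    Integrable (fun η => exp (γ * ∑ x ∈ B, φ (η x))) ν ∧
      log (∫ η, exp (γ * ∑ x ∈ B, φ (η x)) ∂ν) ≤ B.card * τ := by
  have hmeas : Measurable fun η : ι → β => exp (γ * ∑ x ∈ B, φ (η x)) :=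
    measurable_exp.comp ((Finset.measurable_sum _ fun x _ =>
      (Measurable.of_discrete (f := φ)).comp (measurable_pi_apply x)).const_mul γ)
  have hlin : ∫⁻ η, ENNReal.ofReal (exp (γ * ∑ x ∈ B, φ (η x))) ∂ν ≤
      (1 + ENNReal.ofReal τ) ^ B.card := by
    simp_rw [Finset.mul_sum, exp_sum, ENNReal.ofReal_prod_of_nonneg fun _ _ => (exp_pos _).le]
    rw [lintegral_prod_apply_eq_pow hν B fun k => ENNReal.ofReal (exp (γ * φ k))]
    gcongr
  have hint : Integrable (fun η => exp (γ * ∑ x ∈ B, φ (η x))) ν :=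
    ⟨hmeas.aestronglyMeasurable, (hasFiniteIntegral_iff_ofReal
      (ae_of_all _ fun _ => (exp_pos _).le)).mpr (hlin.trans_lt (by simp))⟩
  refine ⟨hint, ?_⟩
  have hle : ∫ η, exp (γ * ∑ x ∈ B, φ (η x)) ∂ν ≤ (1 + τ) ^ B.card := by
    rw [integral_eq_lintegral_of_nonneg_ae (ae_of_all _ fun _ => (exp_pos _).le)
      hmeas.aestronglyMeasurable]
    refine (ENNReal.toReal_mono (by simp) hlin).trans_eq ?_
    rw [ENNReal.toReal_pow, ENNReal.toReal_add ENNReal.one_ne_top ENNReal.ofReal_ne_top,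
      ENNReal.toReal_one, ENNReal.toReal_ofReal hτ]
  calc log (∫ η, exp (γ * ∑ x ∈ B, φ (η x)) ∂ν)
      ≤ log ((1 + τ) ^ B.card) := log_le_log (integral_exp_pos hint) hle
    _ = B.card * log (1 + τ) := log_pow _ _
    _ ≤ B.card * τ := by
        gcongr
        linarith [log_le_sub_one_of_pos (show 0 < 1 + τ by linarith)]

end IIDCoordinates

theorem entropy_truncation_bound_general
    (n : ℕ)
    (θ : Measure ℕ) [IsProbabilityMeasure θ]
    (hexp : ∀ γ : ℝ, 0 < γ → (∫⁻ k : ℕ, ENNReal.ofReal (Real.exp (γ * k)) ∂θ) < ⊤)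
    (ν : Measure ((Fin n → ℤ) → ℕ)) [IsProbabilityMeasure ν]
    (hν : ∀ (S : Finset (Fin n → ℤ)) (vals : (Fin n → ℤ) → ℕ),
        ν {η | ∀ x ∈ S, η x = vals x} = ∏ x ∈ S, θ {vals x})
    (C R : ℝ) (hC : 0 < C) (hR : 0 < R) :
    ∀ ε : ℝ, 0 < ε → ∃ A₀ : ℕ, ∀ A : ℕ, A₀ ≤ A →
      ∀ N : ℕ, 1 ≤ N →
      ∀ μ : Measure ((Fin n → ℤ) → ℕ), IsProbabilityMeasure μ → μ ≪ ν →
        Integrable (fun η =>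
          (μ.rnDeriv ν η).toReal * Real.log (μ.rnDeriv ν η).toReal) ν →
        (∫ η, (μ.rnDeriv ν η).toReal * Real.log (μ.rnDeriv ν η).toReal ∂ν)
            ≤ C * (N : ℝ) ^ n →
        (∫⁻ η, (∑' x : Fin n → ℤ,
            Set.indicator {x : Fin n → ℤ | ∀ i, |(x i : ℝ)| ≤ R * N}
              (fun x => if A < η x then (η x : ℝ≥0∞) else 0) x) ∂μ)
          ≤ ENNReal.ofReal (ε * (N : ℝ) ^ n) := by
  intro ε hε
  set γ := (C + 1) / ε
  set τ := ((2 * R + 1) ^ n)⁻¹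
  have hγ : 0 < γ := by positivity
  have hτ : 0 < τ := by positivity
  have hγε : γ * ε = C + 1 := div_mul_cancel₀ _ hε.ne'
  obtain ⟨A₀, hA₀⟩ := eventually_atTop.mp <|
    (tendsto_setLIntegral_Ioi_atTop_zero (hexp γ hγ).ne).eventually_lt_const
      (ENNReal.ofReal_pos.mpr hτ)
  refine ⟨A₀, fun A hA N hN μ _ hμν hent hH => ?_⟩
  set B := Fintype.piFinset fun _ : Fin n => Finset.Icc (-⌊R * N⌋) ⌊R * N⌋
  set G : ((Fin n → ℤ) → ℕ) → ℝ :=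
    fun η => ∑ x ∈ B, (Set.Ioi A).indicator (fun k : ℕ => (k : ℝ)) (η x)
  have hG0 : 0 ≤ G := fun η =>
    Finset.sum_nonneg fun x _ => Set.indicator_nonneg (fun k _ => k.cast_nonneg) _
  have hG : Measurable G := Finset.measurable_sum _ fun x _ =>
    (Measurable.of_discrete (f := (Set.Ioi A).indicator fun k : ℕ => (k : ℝ))).comp
      (measurable_pi_apply x)
  obtain ⟨hexpG, hlogZ⟩ := log_integral_exp_mul_sum_le hν B γ hτ.le
    ((lintegral_exp_mul_indicator_le θ measurableSet_Ioi γ _).trans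
      (add_le_add le_rfl (hA₀ A hA).le))
  obtain ⟨hGμ, hGle⟩ := mul_integral_le_entropy_add_log_integral_exp hμν hγ hG hG0 hexpG hent
  have hcard : (B.card : ℝ) * τ ≤ (N : ℝ) ^ n := by
    have h := card_piFinset_Icc_floor_mul_le (ι := Fin n) hR.le (Nat.one_le_cast.mpr hN)
    rw [Fintype.card_fin] at h
    calc (B.card : ℝ) * τ ≤ (2 * R + 1) ^ n * N ^ n * τ := by gcongr
      _ = N ^ n := by rw [mul_right_comm, mul_inv_cancel₀ (by positivity), one_mul]
  simp_rw [tsum_indicator_setOf_abs_le_eq_ofReal_sum]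
  rw [← ofReal_integral_eq_lintegral_ofReal hGμ (ae_of_all _ hG0)]
  refine ENNReal.ofReal_le_ofReal (le_of_mul_le_mul_left ?_ hγ)
  calc γ * ∫ η, G η ∂μ ≤ C * N ^ n + N ^ n := by linarith
    _ = γ * (ε * N ^ n) := by linear_combination (-(N : ℝ) ^ n) * hγε

/-- Entropy truncation bound. Let `θ` be a probability measure on `ℕ`
with all exponential moments finite, `ν = ⊗_{x ∈ ℤ^n} θ`, and fix `C, R > 0`. Then,
uniformly over `N ≥ 1` and over probability measures `μ` with relative entropy
`H(μ | ν) ≤ C N^n`, the truncated particle averages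
`(1/N^n) ∫ Σ_{|x| ≤ RN} η(x) 1(η(x) > A) dμ` tend to `0` as `A → ∞`. -/
theorem entropy_truncation_bound
    (n : ℕ) (hn : 0 < n)
    (θ : Measure ℕ) [IsProbabilityMeasure θ]
    (hexp : ∀ γ : ℝ, 0 < γ → (∫⁻ k : ℕ, ENNReal.ofReal (Real.exp (γ * k)) ∂θ) < ⊤)
    (ν : Measure ((Fin n → ℤ) → ℕ)) [IsProbabilityMeasure ν]
    (hν : ∀ (S : Finset (Fin n → ℤ)) (vals : (Fin n → ℤ) → ℕ),
        ν {η | ∀ x ∈ S, η x = vals x} = ∏ x ∈ S, θ {vals x})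
    (C R : ℝ) (hC : 0 < C) (hR : 0 < R) :
    ∀ ε : ℝ, 0 < ε → ∃ A₀ : ℕ, ∀ A : ℕ, A₀ ≤ A →
      ∀ N : ℕ, 1 ≤ N →
      ∀ μ : Measure ((Fin n → ℤ) → ℕ), IsProbabilityMeasure μ → μ ≪ ν →
        Integrable (fun η =>
          (μ.rnDeriv ν η).toReal * Real.log (μ.rnDeriv ν η).toReal) ν →
        (∫ η, (μ.rnDeriv ν η).toReal * Real.log (μ.rnDeriv ν η).toReal ∂ν)
            ≤ C * (N : ℝ) ^ n →
        (∫⁻ η, (∑' x : Fin n → ℤ,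
            Set.indicator {x : Fin n → ℤ | ∀ i, |(x i : ℝ)| ≤ R * N}
              (fun x => if A < η x then (η x : ℝ≥0∞) else 0) x) ∂μ)
          ≤ ENNReal.ofReal (ε * (N : ℝ) ^ n) :=
  entropy_truncation_bound_general n θ hexp ν hν C R hC hR
end
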